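/- (Base norm contraction coefficient.) Let C ⊆ V and C' ⊆ V' be proper cones with bases B = C ∩ {v | ⟨e,v⟩ = 1} and B' = C' ∩ {v' | ⟨e',v'⟩ = 1}, and let T : V → V' be any linear map. Then sup_{v₁ ≠ v₂ ∈ B} ‖T v₁ − T v₂‖_{B'} / ‖v₁ − v₂‖_B = (1/2) · sup_{v₁, v₂ ∈ ext(B)} ‖T v₁ − T v₂‖_{B'}, where ext(B) denotes the set of extreme points of B; moreover the supremum on the right-hand side may equivalently be taken over all v₁, v₂ ∈ B. -/

import Mathlib

noncomputable section

variable {V : Type*} [NormedAddCommGroup V] [InnerProductSpace ℝ V]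

/-- A proper cone: closed, convex, closed under nonnegative scaling, pointed and solid. -/
def IsProperCone (C : Set V) : Prop :=
  IsClosed C ∧ Convex ℝ C ∧ (∀ (r : ℝ), 0 ≤ r → ∀ x ∈ C, r • x ∈ C) ∧
    (C ∩ (-C) = {0}) ∧ (Submodule.span ℝ C = ⊤)

/-- `sup_C(a/b) := inf {λ : ℝ | λ • b - a ∈ C}`, as an extended real (`⊤` if no such `λ`). -/
def supRatio (C : Set V) (a b : V) : EReal :=
  sInf ((fun l : ℝ => (l : EReal)) '' {l : ℝ | l • b - a ∈ C})

/-- `inf_C(a/b) := sup {λ : ℝ | a - λ • b ∈ C}`. -/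
def infRatio (C : Set V) (a b : V) : EReal :=
  sSup ((fun l : ℝ => (l : EReal)) '' {l : ℝ | a - l • b ∈ C})

/-- Hilbert's projective metric `h_C(a,b) = ln (sup_C(a/b) * sup_C(b/a)) ∈ [0,∞]`. -/
def hilbertDist (C : Set V) (a b : V) : EReal :=
  if supRatio C a b = ⊤ ∨ supRatio C b a = ⊤ then ⊤
  else ((Real.log ((supRatio C a b).toReal * (supRatio C b a).toReal) : ℝ) : EReal)

/-- The oscillation `osc_C(a/b) = sup_C(a/b) - inf_C(a/b)`. -/
def oscRatio (C : Set V) (a b : V) : EReal :=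
  supRatio C a b - infRatio C a b

variable {V' : Type*} [NormedAddCommGroup V'] [InnerProductSpace ℝ V']

/-- The projective diameter `Δ(T)` of a cone-preserving linear map `T`. -/
def projDiam (C : Set V) (C' : Set V') (T : V →ₗ[ℝ] V') : EReal :=
  ⨆ (a : V) (_ : a ∈ C \ {0}) (b : V) (_ : b ∈ C \ {0}), hilbertDist C' (T a) (T b)

/-- `tanh(x/4)`, with the convention `tanh(⊤/4) = 1`. -/
def tanhQuarter (x : EReal) : ℝ :=
  if x = ⊤ then 1 else Real.tanh (x.toReal / 4)

/-- `tanh(x/2)`, with the convention `tanh(⊤/2) = 1`. -/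
def tanhHalf (x : EReal) : ℝ :=
  if x = ⊤ then 1 else Real.tanh (x.toReal / 2)

/-- The dual cone of `C` (identifying `V` with its dual via the inner product). -/
def dualConeSet (C : Set V) : Set V := {w : V | ∀ c ∈ C, 0 ≤ (inner ℝ w c : ℝ)}

/-- The base norm `‖v‖_B` induced by the cone `C` and the functional `⟨e, ·⟩`. -/
def baseNorm (C : Set V) (e : V) (v : V) : ℝ :=
  sInf {r : ℝ | ∃ cp ∈ C, ∃ cm ∈ C, v = cp - cm ∧ r = (inner ℝ e cp : ℝ) + (inner ℝ e cm : ℝ)}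

/-- The negativity `N_B(v)` induced by the cone `C` and the functional `⟨e, ·⟩`. -/
def negativity (C : Set V) (e : V) (v : V) : ℝ :=
  sInf {r : ℝ | ∃ cp ∈ C, ∃ cm ∈ C, v = cp - cm ∧ r = (inner ℝ e cm : ℝ)}

/-!
For `x, y ∈ B` we have `⟪e, x - y⟫ = 0`, so any decomposition `x - y = c₊ - c₋` in `C` has
`⟪e, c₊⟫ = ⟪e, c₋⟫ = t` and `x - y = t • (b₊ - b₋)` with `b₊, b₋ ∈ B`. Taking the infimum over
decompositions gives `‖T x - T y‖_{B'} ≤ ‖x - y‖_B / 2 · sup_{B × B} ‖T b₊ - T b₋‖_{B'}`;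
conversely `‖x - y‖_B ≤ 2` on `B`. The supremum over `B × B` equals the one over
`ext (B × B) = ext B × ext B`: `(x, y) ↦ ‖T x - T y‖_{B'}` is a continuous convex function and, by
Krein–Milman, `B × B` is the closed convex hull of its extreme points.
-/

open Set
open scoped InnerProductSpace

namespace IsProperCone

variable {C : Set V}

lemma zero_mem (hC : IsProperCone C) : (0 : V) ∈ C :=
  (hC.2.2.2.1.symm ▸ rfl : (0 : V) ∈ C ∩ -C).1

lemma smul_mem (hC : IsProperCone C) {r : ℝ} (hr : 0 ≤ r) {x : V} (hx : x ∈ C) : r • x ∈ C :=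
  hC.2.2.1 r hr x hx

lemma add_mem (hC : IsProperCone C) {x y : V} (hx : x ∈ C) (hy : y ∈ C) : x + y ∈ C := by
  have hmid := hC.2.1 hx hy (by norm_num : (0 : ℝ) ≤ 1 / 2) (by norm_num : (0 : ℝ) ≤ 1 / 2)
    (by norm_num)
  convert hC.smul_mem zero_le_two hmid using 1
  rw [smul_add, smul_smul, smul_smul]
  norm_num

lemma exists_sub_eq (hC : IsProperCone C) (v : V) : ∃ cp ∈ C, ∃ cm ∈ C, cp - cm = v := by
  have hv : v ∈ Submodule.span ℝ C := hC.2.2.2.2 ▸ Submodule.mem_top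
  induction hv using Submodule.span_induction with
  | mem c hc => exact ⟨c, hc, 0, hC.zero_mem, sub_zero c⟩
  | zero => exact ⟨0, hC.zero_mem, 0, hC.zero_mem, sub_zero 0⟩
  | add x y _ _ hx hy =>
    obtain ⟨xp, hxp, xm, hxm, rfl⟩ := hx
    obtain ⟨yp, hyp, ym, hym, rfl⟩ := hy
    exact ⟨xp + yp, hC.add_mem hxp hyp, xm + ym, hC.add_mem hxm hym, by abel⟩
  | smul r x _ hx =>
    obtain ⟨xp, hxp, xm, hxm, rfl⟩ := hx
    rcases le_total 0 r with hr | hr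
    · exact ⟨r • xp, hC.smul_mem hr hxp, r • xm, hC.smul_mem hr hxm, (smul_sub r xp xm).symm⟩
    · refine ⟨(-r) • xm, hC.smul_mem (neg_nonneg.2 hr) hxm,
        (-r) • xp, hC.smul_mem (neg_nonneg.2 hr) hxp, ?_⟩
      rw [smul_sub, neg_smul, neg_smul]
      abel

end IsProperCone

section DualCone

variable {C : Set V} {e : V}

lemma exists_pos_mul_norm_le_inner (he : e ∈ interior (dualConeSet C)) :
    ∃ ε > 0, ∀ c ∈ C, ε * ‖c‖ ≤ ⟪e, c⟫_ℝ := by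
  obtain ⟨δ, hδ, hball⟩ := Metric.isOpen_iff.1 isOpen_interior e he
  refine ⟨δ / 2, half_pos hδ, fun c hc => ?_⟩
  rcases eq_or_ne c 0 with rfl | hc0
  · simp
  have hcn : 0 < ‖c‖ := norm_pos_iff.2 hc0
  have hmem : e - (δ / 2 / ‖c‖) • c ∈ dualConeSet C := by
    refine interior_subset (hball ?_)
    rw [Metric.mem_ball, dist_eq_norm, sub_sub_cancel_left, norm_neg, norm_smul,
      Real.norm_of_nonneg (by positivity), div_mul_cancel₀ _ hcn.ne']
    linarith
  have h := hmem c hc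
  rw [inner_sub_left, real_inner_smul_left, real_inner_self_eq_norm_mul_norm] at h
  have hcc : δ / 2 / ‖c‖ * (‖c‖ * ‖c‖) = δ / 2 * ‖c‖ := by field_simp
  linarith

lemma inner_pos_of_mem_interior_dualConeSet (he : e ∈ interior (dualConeSet C)) {c : V}
    (hc : c ∈ C) (hc0 : c ≠ 0) : 0 < ⟪e, c⟫_ℝ := by
  obtain ⟨ε, hε, hεC⟩ := exists_pos_mul_norm_le_inner he
  exact (mul_pos hε (norm_pos_iff.2 hc0)).trans_le (hεC c hc)

end DualCone

section BaseNorm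

variable {C : Set V} {e : V}

lemma baseNorm_sub_le (he : e ∈ dualConeSet C) {cp cm : V} (hcp : cp ∈ C) (hcm : cm ∈ C) :
    baseNorm C e (cp - cm) ≤ ⟪e, cp⟫_ℝ + ⟪e, cm⟫_ℝ := by
  refine csInf_le ⟨0, ?_⟩ ⟨cp, hcp, cm, hcm, rfl, rfl⟩
  rintro r ⟨cp, hcp, cm, hcm, -, rfl⟩
  exact add_nonneg (he cp hcp) (he cm hcm)

lemma le_baseNorm (hC : IsProperCone C) {v : V} {a : ℝ}
    (h : ∀ cp ∈ C, ∀ cm ∈ C, cp - cm = v → a ≤ ⟪e, cp⟫_ℝ + ⟪e, cm⟫_ℝ) : a ≤ baseNorm C e v := by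
  obtain ⟨cp, hcp, cm, hcm, hv⟩ := hC.exists_sub_eq v
  refine le_csInf ⟨_, cp, hcp, cm, hcm, hv.symm, rfl⟩ ?_
  rintro r ⟨cp, hcp, cm, hcm, hv, rfl⟩
  exact h cp hcp cm hcm hv.symm

lemma le_baseNorm_mul (hC : IsProperCone C) {v : V} {a c : ℝ} (hc : 0 ≤ c)
    (h : ∀ cp ∈ C, ∀ cm ∈ C, cp - cm = v → a ≤ (⟪e, cp⟫_ℝ + ⟪e, cm⟫_ℝ) * c) :
    a ≤ baseNorm C e v * c := by
  rcases hc.eq_or_lt with rfl | hc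
  · obtain ⟨cp, hcp, cm, hcm, hv⟩ := hC.exists_sub_eq v
    simpa using h cp hcp cm hcm hv
  · rw [← div_le_iff₀ hc]
    exact le_baseNorm hC fun cp hcp cm hcm hv => (div_le_iff₀ hc).2 (h cp hcp cm hcm hv)

lemma baseNorm_nonneg (hC : IsProperCone C) (he : e ∈ dualConeSet C) (v : V) :
    0 ≤ baseNorm C e v :=
  le_baseNorm hC fun cp hcp cm hcm _ => add_nonneg (he cp hcp) (he cm hcm)

lemma baseNorm_zero (hC : IsProperCone C) (he : e ∈ dualConeSet C) : baseNorm C e 0 = 0 :=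
  le_antisymm (by simpa using baseNorm_sub_le he hC.zero_mem hC.zero_mem)
    (baseNorm_nonneg hC he 0)

lemma baseNorm_add_le (hC : IsProperCone C) (he : e ∈ dualConeSet C) (v w : V) :
    baseNorm C e (v + w) ≤ baseNorm C e v + baseNorm C e w := by
  rw [← sub_le_iff_le_add]
  refine le_baseNorm hC fun vp hvp vm hvm hv => ?_
  rw [sub_le_comm]
  refine le_baseNorm hC fun wp hwp wm hwm hw => ?_
  have h := baseNorm_sub_le he (hC.add_mem hvp hwp) (hC.add_mem hvm hwm)
  rw [add_sub_add_comm, hv, hw, inner_add_right, inner_add_right] at h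
  linarith

lemma baseNorm_neg (v : V) : baseNorm C e (-v) = baseNorm C e v := by
  unfold baseNorm
  congr 1
  ext r
  constructor
  · rintro ⟨cp, hcp, cm, hcm, hv, rfl⟩
    exact ⟨cm, hcm, cp, hcp, by rw [← neg_sub, ← hv, neg_neg], add_comm _ _⟩
  · rintro ⟨cp, hcp, cm, hcm, hv, rfl⟩
    exact ⟨cm, hcm, cp, hcp, by rw [hv, neg_sub], add_comm _ _⟩

lemma baseNorm_smul_le (hC : IsProperCone C) (he : e ∈ dualConeSet C) {t : ℝ} (ht : 0 ≤ t)
    (v : V) : baseNorm C e (t • v) ≤ t * baseNorm C e v := by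
  rw [mul_comm]
  refine le_baseNorm_mul hC ht fun cp hcp cm hcm hv => ?_
  have h := baseNorm_sub_le he (hC.smul_mem ht hcp) (hC.smul_mem ht hcm)
  rwa [← smul_sub, hv, real_inner_smul_right, real_inner_smul_right, ← mul_add, mul_comm] at h

def baseNormSeminorm (hC : IsProperCone C) (he : e ∈ dualConeSet C) : Seminorm ℝ V :=
  Seminorm.ofSMulLE (baseNorm C e) (baseNorm_zero hC he) (baseNorm_add_le hC he) fun r v => by
    rcases le_total 0 r with hr | hr
    · rw [Real.norm_of_nonneg hr]
      exact baseNorm_smul_le hC he hr v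
    · rw [Real.norm_of_nonpos hr, ← baseNorm_neg v, ← neg_smul_neg]
      exact baseNorm_smul_le hC he (neg_nonneg.2 hr) (-v)

@[simp]
lemma coe_baseNormSeminorm (hC : IsProperCone C) (he : e ∈ dualConeSet C) :
    ⇑(baseNormSeminorm hC he) = baseNorm C e :=
  rfl

end BaseNorm

lemma Seminorm.continuous_of_finiteDimensional {E : Type*} [NormedAddCommGroup E]
    [NormedSpace ℝ E] [FiniteDimensional ℝ E] (p : Seminorm ℝ E) : Continuous p :=
  continuousOn_univ.1 (p.convexOn.continuousOn isOpen_univ)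

lemma setOf_exists_mem_eq_image_prod {α β : Type*} (s : Set α) (g : α → α → β) :
    {r | ∃ a ∈ s, ∃ b ∈ s, r = g a b} = (fun p : α × α => g p.1 p.2) '' s ×ˢ s := by
  ext r
  simp [eq_comm]

section KreinMilman

variable {E : Type*} [AddCommGroup E] [Module ℝ E] [TopologicalSpace E] [T2Space E]
  [IsTopologicalAddGroup E] [ContinuousSMul ℝ E] [LocallyConvexSpace ℝ E] {s : Set E}
  {f : E → ℝ}

lemma IsCompact.le_of_forall_extremePoints_le (hs : IsCompact s) (hsc : Convex ℝ s)
    (hf : ConvexOn ℝ s f) (hfc : ContinuousOn f s) {M : ℝ}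
    (hM : ∀ y ∈ s.extremePoints ℝ, f y ≤ M) {x : E} (hx : x ∈ s) : f x ≤ M := by
  have hhull : convexHull ℝ (s.extremePoints ℝ) ⊆ s ∩ f ⁻¹' Iic M := fun z hz =>
    have ⟨y, hy, hzy⟩ := hf.exists_ge_of_mem_convexHull extremePoints_subset hz
    ⟨convexHull_min extremePoints_subset hsc hz, hzy.trans (hM y hy)⟩
  have hclosed : IsClosed (s ∩ f ⁻¹' Iic M) :=
    hfc.preimage_isClosed_of_isClosed hs.isClosed isClosed_Iic
  rw [← closure_convexHull_extremePoints hs hsc] at hx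
  exact (closure_minimal hhull hclosed hx).2

lemma IsCompact.sSup_image_extremePoints (hs : IsCompact s) (hsc : Convex ℝ s)
    (hf : ConvexOn ℝ s f) (hfc : ContinuousOn f s) :
    sSup (f '' s.extremePoints ℝ) = sSup (f '' s) := by
  rcases s.eq_empty_or_nonempty with rfl | hne
  · simp
  have hbdd := hs.bddAbove_image hfc
  refine le_antisymm (csSup_le_csSup hbdd ((hs.extremePoints_nonempty hne).image f)
    (image_mono extremePoints_subset)) (csSup_le (hne.image f) ?_)
  rintro _ ⟨x, hx, rfl⟩
  exact hs.le_of_forall_extremePoints_le hsc hf hfc (fun y hy =>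
    le_csSup (hbdd.mono (image_mono extremePoints_subset)) (mem_image_of_mem f hy)) hx

theorem IsCompact.sSup_seminorm_sub_extremePoints (hs : IsCompact s) (hsc : Convex ℝ s)
    (q : Seminorm ℝ E) (hq : Continuous q) :
    sSup {r | ∃ x ∈ s.extremePoints ℝ, ∃ y ∈ s.extremePoints ℝ, r = q (x - y)}
      = sSup {r | ∃ x ∈ s, ∃ y ∈ s, r = q (x - y)} := by
  simp only [setOf_exists_mem_eq_image_prod, ← extremePoints_prod]
  exact (hs.prod hs).sSup_image_extremePoints (hsc.prod hsc)
    ((q.convexOn.comp_linearMap (LinearMap.fst ℝ E E - LinearMap.snd ℝ E E)).subset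
      (subset_univ _) (hsc.prod hsc))
    (hq.comp (continuous_fst.sub continuous_snd)).continuousOn

end KreinMilman

def coneBase (C : Set V) (e : V) : Set V := C ∩ {v | ⟪e, v⟫_ℝ = 1}

section ConeBase

variable {C : Set V} {e : V}

lemma convex_coneBase (hC : IsProperCone C) : Convex ℝ (coneBase C e) :=
  hC.2.1.inter (convex_hyperplane (innerₛₗ ℝ e).isLinear 1)

lemma isCompact_coneBase [FiniteDimensional ℝ V] (hC : IsProperCone C)
    (he : e ∈ interior (dualConeSet C)) : IsCompact (coneBase C e) := by
  obtain ⟨ε, hε, hεC⟩ := exists_pos_mul_norm_le_inner he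
  refine Metric.isCompact_of_isClosed_isBounded
    (hC.1.inter (isClosed_eq (continuous_const.inner continuous_id) continuous_const))
    ((Metric.isBounded_closedBall (x := 0) (r := ε⁻¹)).subset fun v hv => ?_)
  rw [Metric.mem_closedBall, dist_zero_right, ← mul_le_mul_iff_right₀ hε, mul_inv_cancel₀ hε.ne']
  exact hv.2 ▸ hεC v hv.1

lemma baseNorm_pos (hC : IsProperCone C) (he : e ∈ interior (dualConeSet C)) {v : V}
    (hv : v ≠ 0) : 0 < baseNorm C e v := by
  obtain ⟨ε, hε, hεC⟩ := exists_pos_mul_norm_le_inner he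
  refine (mul_pos hε (norm_pos_iff.2 hv)).trans_le (le_baseNorm hC fun cp hcp cm hcm hcv => ?_)
  calc ε * ‖v‖ ≤ ε * ‖cp‖ + ε * ‖cm‖ := by
        rw [← mul_add, ← hcv]; exact mul_le_mul_of_nonneg_left (norm_sub_le cp cm) hε.le
    _ ≤ ⟪e, cp⟫_ℝ + ⟪e, cm⟫_ℝ := add_le_add (hεC cp hcp) (hεC cm hcm)

lemma baseNorm_sub_le_two (he : e ∈ dualConeSet C) {x y : V} (hx : x ∈ coneBase C e)
    (hy : y ∈ coneBase C e) : baseNorm C e (x - y) ≤ 2 := by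
  have h := baseNorm_sub_le he hx.1 hy.1
  rw [hx.2, hy.2] at h
  linarith

/-- A decomposition `x - y = cp - cm` in the cone has `⟪e, cp⟫ = ⟪e, cm⟫ =: t`, so
`x - y = t • (t⁻¹ • cp - t⁻¹ • cm)` is `t` times a difference of two points of the base. -/
lemma seminorm_sub_le_baseNorm_mul (hC : IsProperCone C) (he : e ∈ interior (dualConeSet C))
    (q : Seminorm ℝ V) {M : ℝ} (hM : ∀ b ∈ coneBase C e, ∀ b' ∈ coneBase C e, q (b - b') ≤ M)
    {x y : V} (hx : x ∈ coneBase C e) (hy : y ∈ coneBase C e) :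
    q (x - y) ≤ baseNorm C e (x - y) * (M / 2) := by
  have hM0 : 0 ≤ M := by simpa using hM x hx x hx
  refine le_baseNorm_mul hC (by positivity) fun cp hcp cm hcm hcv => ?_
  have hmass : ⟪e, cm⟫_ℝ = ⟪e, cp⟫_ℝ := by
    have h := congrArg (inner ℝ e) hcv
    rw [inner_sub_right, inner_sub_right, hx.2, hy.2] at h
    linarith
  obtain ⟨t, hcpt⟩ : ∃ t, ⟪e, cp⟫_ℝ = t := ⟨_, rfl⟩
  rw [hcpt] at hmass
  rw [hcpt, hmass]
  rcases (hcpt ▸ interior_subset he cp hcp : 0 ≤ t).eq_or_lt with ht | ht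
  · have hzero : ∀ c ∈ C, ⟪e, c⟫_ℝ = 0 → c = 0 := fun c hc hc0 =>
      by_contra fun hne => (inner_pos_of_mem_interior_dualConeSet he hc hne).ne' hc0
    rw [← hcv, hzero cp hcp (hcpt.trans ht.symm), hzero cm hcm (hmass.trans ht.symm), ← ht]
    simp
  · have hb : ∀ c ∈ C, ⟪e, c⟫_ℝ = t → t⁻¹ • c ∈ coneBase C e := fun c hc hct =>
      ⟨hC.smul_mem (inv_nonneg.2 ht.le) hc, by simp [real_inner_smul_right, hct, ht.ne']⟩
    have hsplit : x - y = t • (t⁻¹ • cp - t⁻¹ • cm) := by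
      rw [smul_sub, smul_inv_smul₀ ht.ne', smul_inv_smul₀ ht.ne', hcv]
    calc q (x - y) = t * q (t⁻¹ • cp - t⁻¹ • cm) := by
          rw [hsplit, map_smul_eq_mul, Real.norm_of_nonneg ht.le]
      _ ≤ t * M := mul_le_mul_of_nonneg_left (hM _ (hb cp hcp hcpt) _ (hb cm hcm hmass)) ht.le
      _ = (t + t) * (M / 2) := by ring

end ConeBase

section ContractionCoefficient

variable [FiniteDimensional ℝ V] {C : Set V} {e : V}

lemma bddAbove_seminorm_sub_coneBase (hC : IsProperCone C) (he : e ∈ interior (dualConeSet C))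
    (q : Seminorm ℝ V) (hq : Continuous q) :
    BddAbove {r | ∃ x ∈ coneBase C e, ∃ y ∈ coneBase C e, r = q (x - y)} := by
  have hK := isCompact_coneBase hC he
  rw [setOf_exists_mem_eq_image_prod]
  exact (hK.prod hK).bddAbove_image (hq.comp (continuous_fst.sub continuous_snd)).continuousOn

theorem sSup_seminorm_div_baseNorm (hC : IsProperCone C) (he : e ∈ interior (dualConeSet C))
    (q : Seminorm ℝ V) (hq : Continuous q) :
    sSup {r | ∃ x ∈ coneBase C e, ∃ y ∈ coneBase C e, x ≠ y ∧
        r = q (x - y) / baseNorm C e (x - y)}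
      = 1 / 2 * sSup {r | ∃ x ∈ coneBase C e, ∃ y ∈ coneBase C e, r = q (x - y)} := by
  set D := sSup {r | ∃ x ∈ coneBase C e, ∃ y ∈ coneBase C e, r = q (x - y)}
  set R := sSup {r | ∃ x ∈ coneBase C e, ∃ y ∈ coneBase C e, x ≠ y ∧
    r = q (x - y) / baseNorm C e (x - y)}
  have hD : ∀ x ∈ coneBase C e, ∀ y ∈ coneBase C e, q (x - y) ≤ D := fun x hx y hy =>
    le_csSup (bddAbove_seminorm_sub_coneBase hC he q hq) ⟨x, hx, y, hy, rfl⟩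
  have hD0 : 0 ≤ D := Real.sSup_nonneg (by rintro _ ⟨x, -, y, -, rfl⟩; exact apply_nonneg q _)
  have hratio : ∀ x ∈ coneBase C e, ∀ y ∈ coneBase C e, x ≠ y →
      q (x - y) / baseNorm C e (x - y) ≤ D / 2 := fun x hx y hy hxy =>
    (div_le_iff₀' (baseNorm_pos hC he (sub_ne_zero.2 hxy))).2
      (seminorm_sub_le_baseNorm_mul hC he q hD hx hy)
  have hR0 : 0 ≤ R := Real.sSup_nonneg (by
    rintro _ ⟨x, -, y, -, -, rfl⟩
    exact div_nonneg (apply_nonneg q _) (baseNorm_nonneg hC (interior_subset he) _))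
  have hR : ∀ x ∈ coneBase C e, ∀ y ∈ coneBase C e, q (x - y) ≤ R * 2 := by
    intro x hx y hy
    rcases eq_or_ne x y with rfl | hxy
    · simpa using hR0
    have hpos := baseNorm_pos hC he (sub_ne_zero.2 hxy)
    rw [← div_mul_cancel₀ (q (x - y)) hpos.ne']
    refine mul_le_mul (le_csSup ⟨D / 2, ?_⟩ ⟨x, hx, y, hy, hxy, rfl⟩)
      (baseNorm_sub_le_two (interior_subset he) hx hy) hpos.le hR0
    rintro _ ⟨x, hx, y, hy, hxy, rfl⟩
    exact hratio x hx y hy hxy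
  refine le_antisymm (Real.sSup_le ?_ (by positivity)) ?_
  · rintro _ ⟨x, hx, y, hy, hxy, rfl⟩
    linarith [hratio x hx y hy hxy]
  · have hDR : D ≤ R * 2 :=
      Real.sSup_le (by rintro _ ⟨x, hx, y, hy, rfl⟩; exact hR x hx y hy) (by positivity)
    linarith

end ContractionCoefficient

theorem baseNorm_contraction_coefficient_general
    {V : Type*} [NormedAddCommGroup V] [InnerProductSpace ℝ V] [FiniteDimensional ℝ V]
    {V' : Type*} [NormedAddCommGroup V'] [InnerProductSpace ℝ V']
    (C : Set V) (C' : Set V') (hC : IsProperCone C) (hC' : IsProperCone C')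
    (e : V) (he : e ∈ interior (dualConeSet C))
    (e' : V') (he' : e' ∈ interior (dualConeSet C'))
    (B : Set V) (hB : B = C ∩ {v : V | (inner ℝ e v : ℝ) = 1})
    (T : V →ₗ[ℝ] V') :
    sSup {r : ℝ | ∃ v₁ ∈ B, ∃ v₂ ∈ B, v₁ ≠ v₂ ∧
        r = baseNorm C' e' (T v₁ - T v₂) / baseNorm C e (v₁ - v₂)}
      = (1 / 2) * sSup {r : ℝ | ∃ v₁ ∈ Set.extremePoints ℝ B, ∃ v₂ ∈ Set.extremePoints ℝ B,
          r = baseNorm C' e' (T v₁ - T v₂)} ∧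
    sSup {r : ℝ | ∃ v₁ ∈ Set.extremePoints ℝ B, ∃ v₂ ∈ Set.extremePoints ℝ B,
          r = baseNorm C' e' (T v₁ - T v₂)}
      = sSup {r : ℝ | ∃ v₁ ∈ B, ∃ v₂ ∈ B, r = baseNorm C' e' (T v₁ - T v₂)} := by
  obtain rfl : B = coneBase C e := hB
  set q := (baseNormSeminorm hC' (interior_subset he')).comp T
  have hq : Continuous q := q.continuous_of_finiteDimensional
  have hqT : ∀ v₁ v₂, baseNorm C' e' (T v₁ - T v₂) = q (v₁ - v₂) := fun v₁ v₂ => by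
    simp [q, map_sub]
  simp only [hqT]
  rw [(isCompact_coneBase hC he).sSup_seminorm_sub_extremePoints (convex_coneBase hC) q hq]
  exact ⟨sSup_seminorm_div_baseNorm hC he q hq, rfl⟩

/-- **Base norm contraction coefficient.** -/
theorem baseNorm_contraction_coefficient
    {V : Type*} [NormedAddCommGroup V] [InnerProductSpace ℝ V] [FiniteDimensional ℝ V]
    {V' : Type*} [NormedAddCommGroup V'] [InnerProductSpace ℝ V'] [FiniteDimensional ℝ V']
    (C : Set V) (C' : Set V') (hC : IsProperCone C) (hC' : IsProperCone C')
    (e : V) (he : e ∈ interior (dualConeSet C))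
    (e' : V') (he' : e' ∈ interior (dualConeSet C'))
    (B : Set V) (hB : B = C ∩ {v : V | (inner ℝ e v : ℝ) = 1})
    (B' : Set V') (hB' : B' = C' ∩ {v : V' | (inner ℝ e' v : ℝ) = 1})
    (T : V →ₗ[ℝ] V') :
    sSup {r : ℝ | ∃ v₁ ∈ B, ∃ v₂ ∈ B, v₁ ≠ v₂ ∧
        r = baseNorm C' e' (T v₁ - T v₂) / baseNorm C e (v₁ - v₂)}
      = (1 / 2) * sSup {r : ℝ | ∃ v₁ ∈ Set.extremePoints ℝ B, ∃ v₂ ∈ Set.extremePoints ℝ B,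
          r = baseNorm C' e' (T v₁ - T v₂)} ∧
    sSup {r : ℝ | ∃ v₁ ∈ Set.extremePoints ℝ B, ∃ v₂ ∈ Set.extremePoints ℝ B,
          r = baseNorm C' e' (T v₁ - T v₂)}
      = sSup {r : ℝ | ∃ v₁ ∈ B, ∃ v₂ ∈ B, r = baseNorm C' e' (T v₁ - T v₂)} :=
  baseNorm_contraction_coefficient_general C C' hC hC' e he e' he' B hB T

end
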